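/- Consider the 10-dimensional solvable metric Lie algebra l_∞ with orthonormal basis {Z, H, X, Y, w₁, w₂, v₃, v₄, w₅, w₆} and nonzero brackets (up to skew-symmetry) determined by: [H, X] arising from the degeneration of gl(2,ℝ) ⋉ P₂(ℂ²); explicitly, with a = Span{Z, H} acting on the nilradical n = Span{X, Y, w₁, w₂, v₃, v₄, w₅, w₆} via ad Z|_{V} = Id on V = Span{w₁,w₂,v₃,v₄,w₅,w₆}, ad H = diag(−2,−2,0,0,2,2) on V, and the nilpotent brackets [X, v₃] determined by the limit structure. Then the Ricci operator of this metric Lie algebra is Ric = diag(−6, −24, −2, −2, −7, −7, −4, −4, −7, −7), which is negative definite. -/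
import Mathlib


open scoped RealInnerProductSpace

namespace Stmt12

noncomputable abbrev E := EuclideanSpace ℝ (Fin 10)

/-- Structure constants of the 10-dimensional solvable degeneration limit of
`gl(2,ℝ) ⋉ P₂(ℂ²)`, in the orthonormal basis
`{Z, H, X, Y, (1/2)v₁, (1/2)v₂, v₃, v₄, (1/2)v₅, (1/2)v₆}`. -/
def f (i j k : ℕ) : ℝ :=
  if (i, j, k) = (1, 2, 3) then 2 else    -- [H, X] = 2Y
  if (i, j, k) = (1, 3, 2) then 2 else    -- [H, Y] = 2X
  if i = 0 ∧ 4 ≤ j ∧ j = k then 1 else    -- ad Z = Id on V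
  if (i, j, k) = (1, 4, 4) then -2 else   -- ad H = diag(-2,-2,0,0,2,2) on V
  if (i, j, k) = (1, 5, 5) then -2 else
  if (i, j, k) = (1, 8, 8) then 2 else
  if (i, j, k) = (1, 9, 9) then 2 else
  if (i, j, k) = (2, 4, 6) then -1 else   -- the nilpotent brackets [X, ·], [Y, ·]
  if (i, j, k) = (2, 5, 7) then -1 else
  if (i, j, k) = (2, 8, 6) then 1 else
  if (i, j, k) = (2, 9, 7) then 1 else
  if (i, j, k) = (3, 4, 6) then -1 else
  if (i, j, k) = (3, 5, 7) then -1 else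
  if (i, j, k) = (3, 8, 6) then -1 else
  if (i, j, k) = (3, 9, 7) then -1 else 0

/-- The (skew-symmetrized) structure constants. -/
def c (i j k : Fin 10) : ℝ := f i.val j.val k.val - f j.val i.val k.val

/-- The expected Ricci eigenvalues. -/
def d : Fin 10 → ℝ := ![-6, -24, -2, -2, -7, -7, -4, -4, -7, -7]

/-! ### Integer avatars of the structure constants, for kernel computation -/

def fz (i j k : ℕ) : ℤ :=
  if (i, j, k) = (1, 2, 3) then 2 else
  if (i, j, k) = (1, 3, 2) then 2 else
  if i = 0 ∧ 4 ≤ j ∧ j = k then 1 else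
  if (i, j, k) = (1, 4, 4) then -2 else
  if (i, j, k) = (1, 5, 5) then -2 else
  if (i, j, k) = (1, 8, 8) then 2 else
  if (i, j, k) = (1, 9, 9) then 2 else
  if (i, j, k) = (2, 4, 6) then -1 else
  if (i, j, k) = (2, 5, 7) then -1 else
  if (i, j, k) = (2, 8, 6) then 1 else
  if (i, j, k) = (2, 9, 7) then 1 else
  if (i, j, k) = (3, 4, 6) then -1 else
  if (i, j, k) = (3, 5, 7) then -1 else
  if (i, j, k) = (3, 8, 6) then -1 else
  if (i, j, k) = (3, 9, 7) then -1 else 0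

def cz (i j k : Fin 10) : ℤ := fz i.val j.val k.val - fz j.val i.val k.val

def dz : Fin 10 → ℤ := ![-6, -24, -2, -2, -7, -7, -4, -4, -7, -7]

def Kz (i j : Fin 10) : ℤ :=
  -2 * (∑ k, ∑ l, cz i k l * cz j k l)
  + (∑ k, ∑ l, cz k l i * cz k l j)
  - 2 * (∑ k, ∑ l, cz j k l * cz i l k)
  - 12 * (cz 0 i j + cz 0 j i)

lemma fz_cast (i j k : ℕ) : ((fz i j k : ℤ) : ℝ) = f i j k := by
  simp only [f, fz, apply_ite (fun z : ℤ => (z : ℝ))]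
  norm_num

lemma cz_cast (i j k : Fin 10) : ((cz i j k : ℤ) : ℝ) = c i j k := by
  rw [cz, c]
  push_cast
  rw [fz_cast, fz_cast]

lemma dz_cast (i : Fin 10) : ((dz i : ℤ) : ℝ) = d i := by
  fin_cases i <;> norm_num [d, dz]

lemma Kz_eval : ∀ i j : Fin 10, Kz i j = if i = j then 4 * dz i else 0 := by decide

lemma trz_eval : ∀ m : Fin 10, (∑ k, cz m k k) = if m = 0 then 6 else 0 := by decide

lemma hKr (i j : Fin 10) :
    -(1/2) * (∑ k, ∑ l, c i k l * c j k l) + (1/4) * (∑ k, ∑ l, c k l i * c k l j)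
      - (1/2) * (∑ k, ∑ l, c j k l * c i l k) - (1/2) * (6 * c 0 i j + 6 * c 0 j i)
    = if i = j then d i else 0 := by
  have h : ((Kz i j : ℤ) : ℝ) = ((if i = j then 4 * dz i else 0 : ℤ) : ℝ) := by
    exact_mod_cast congrArg (fun z : ℤ => (z : ℝ)) (Kz_eval i j)
  rw [Kz] at h
  push_cast at h
  simp only [cz_cast, dz_cast] at h
  split_ifs at h ⊢ with hij
  · linarith
  · linarith

lemma d_neg (i : Fin 10) : d i < 0 := by
  fin_cases i <;> norm_num [d]

lemma c_sum_diag (m : Fin 10) : (∑ k, c m k k) = if m = 0 then (6:ℝ) else 0 := by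
  have h : ((∑ k, cz m k k : ℤ) : ℝ) = ((if m = 0 then (6:ℤ) else 0 : ℤ) : ℝ) := by
    exact_mod_cast congrArg (fun z : ℤ => (z : ℝ)) (trz_eval m)
  push_cast at h
  simpa only [cz_cast] using h

/-- The Ricci operator of the 10-dimensional solvable degeneration limit of
`gl(2,ℝ) ⋉ P₂(ℂ²)` is `diag(-6,-24,-2,-2,-7,-7,-4,-4,-7,-7)`, which is
negative definite. -/
theorem stmt12
    (e : OrthonormalBasis (Fin 10) ℝ E) (he : e = EuclideanSpace.basisFun (Fin 10) ℝ)
    (br : E →ₗ[ℝ] E →ₗ[ℝ] E)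
    (hbr : ∀ i j, br (e i) (e j) = ∑ k, c i j k • e k)
    (Hm : E) (hHm : ∀ X : E, ⟪Hm, X⟫ = LinearMap.trace ℝ E (br X))
    (ric : E → E → ℝ)
    (hric : ∀ x y, ric x y =
      -(1/2) * ∑ i, ∑ j, ⟪br x (e i), e j⟫ * ⟪br y (e i), e j⟫
      + (1/4) * ∑ i, ∑ j, ⟪br (e i) (e j), x⟫ * ⟪br (e i) (e j), y⟫
      - (1/2) * LinearMap.trace ℝ E (br x ∘ₗ br y)
      - (1/2) * (⟪br Hm x, y⟫ + ⟪x, br Hm y⟫)) :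
    (∀ i j, ric (e i) (e j) = if i = j then d i else 0) ∧
    (∀ x : E, x ≠ 0 → ric x x < 0) := by
  clear he
  have horth : ∀ i j : Fin 10, ⟪e i, e j⟫ = if i = j then (1:ℝ) else 0 :=
    fun i j => orthonormal_iff_ite.mp e.orthonormal i j
  have hc : ∀ i j k, ⟪br (e i) (e j), e k⟫ = c i j k := by
    intro i j k
    rw [hbr, sum_inner]
    simp only [real_inner_smul_left, horth, mul_ite, mul_one, mul_zero,
      Finset.sum_ite_eq', Finset.mem_univ, if_true]
  have htrace : ∀ T : E →ₗ[ℝ] E, LinearMap.trace ℝ E T = ∑ k, ⟪e k, T (e k)⟫ := by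
    intro T
    rw [LinearMap.trace_eq_matrix_trace ℝ e.toBasis T, Matrix.trace]
    simp [Matrix.diag, LinearMap.toMatrix_apply, OrthonormalBasis.coe_toBasis_repr_apply,
      OrthonormalBasis.repr_apply_apply, OrthonormalBasis.coe_toBasis]
  have hxsum : ∀ x : E, ∑ i, ⟪e i, x⟫ • e i = x := fun x => e.sum_repr' x
  -- the mean curvature vector
  have hm0 : Hm = (6:ℝ) • e 0 := by
    have hmcomp : ∀ m, ⟪e m, Hm⟫ = ∑ k, c m k k := by
      intro m
      rw [real_inner_comm, hHm (e m), htrace]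
      exact Finset.sum_congr rfl fun k _ => by rw [real_inner_comm, hc]
    rw [← hxsum Hm]
    simp only [hmcomp, c_sum_diag, ite_smul, zero_smul]
    simp [Finset.sum_ite_eq', Finset.mem_univ]
  -- the value of ric on basis vectors
  have part1 : ∀ i j, ric (e i) (e j) = if i = j then d i else 0 := by
    intro i j
    rw [hric]
    have h3 : LinearMap.trace ℝ E (br (e i) ∘ₗ br (e j)) = ∑ k, ∑ l, c j k l * c i l k := by
      rw [htrace]
      refine Finset.sum_congr rfl fun k _ => ?_
      rw [LinearMap.comp_apply, hbr j k, map_sum, inner_sum]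
      refine Finset.sum_congr rfl fun l _ => ?_
      rw [map_smul, real_inner_smul_right, real_inner_comm, hc]
    have h4a : ⟪br Hm (e i), e j⟫ = 6 * c 0 i j := by
      rw [hm0, map_smul, LinearMap.smul_apply, real_inner_smul_left, hc]
    have h4b : ⟪e i, br Hm (e j)⟫ = 6 * c 0 j i := by
      rw [real_inner_comm, hm0, map_smul, LinearMap.smul_apply, real_inner_smul_left, hc]
    simp only [hc, h3, h4a, h4b]
    rw [← hKr i j]
    try ring
  refine ⟨part1, ?_⟩
  -- bilinearity of ric
  have pull₁ : ∀ (F G : Fin 10 → Fin 10 → ℝ) (t : ℝ),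
      (∑ i, ∑ j, (t * F i j) * G i j) = t * ∑ i, ∑ j, F i j * G i j := by
    intro F G t
    rw [Finset.mul_sum]
    refine Finset.sum_congr rfl fun i _ => ?_
    rw [Finset.mul_sum]
    exact Finset.sum_congr rfl fun j _ => by ring
  have pull₂ : ∀ (F G : Fin 10 → Fin 10 → ℝ) (t : ℝ),
      (∑ i, ∑ j, F i j * (t * G i j)) = t * ∑ i, ∑ j, F i j * G i j := by
    intro F G t
    rw [Finset.mul_sum]
    refine Finset.sum_congr rfl fun i _ => ?_
    rw [Finset.mul_sum]
    exact Finset.sum_congr rfl fun j _ => by ring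
  have hadd₁ : ∀ x x' y, ric (x + x') y = ric x y + ric x' y := by
    intro x x' y
    simp only [hric, map_add, LinearMap.add_apply, inner_add_left, inner_add_right,
      LinearMap.add_comp, add_mul, mul_add, Finset.sum_add_distrib]
    try ring
  have hsmul₁ : ∀ (t : ℝ) x y, ric (t • x) y = t * ric x y := by
    intro t x y
    simp only [hric, map_smul, LinearMap.smul_apply, real_inner_smul_left,
      real_inner_smul_right, LinearMap.smul_comp, smul_eq_mul, pull₁, pull₂]
    try ring
  have hadd₂ : ∀ x y y', ric x (y + y') = ric x y + ric x y' := by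
    intro x y y'
    simp only [hric, map_add, LinearMap.add_apply, inner_add_left, inner_add_right,
      LinearMap.comp_add, add_mul, mul_add, Finset.sum_add_distrib]
    try ring
  have hsmul₂ : ∀ (t : ℝ) x y, ric x (t • y) = t * ric x y := by
    intro t x y
    simp only [hric, map_smul, LinearMap.smul_apply, real_inner_smul_left,
      real_inner_smul_right, LinearMap.comp_smul, smul_eq_mul, pull₁, pull₂]
    try ring
  let B : E →ₗ[ℝ] E →ₗ[ℝ] ℝ :=
    LinearMap.mk₂ ℝ ric hadd₁ hsmul₁ hadd₂ hsmul₂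
  have hB : ∀ x y, ric x y = B x y := fun x y => rfl
  intro x hx
  have hdiag : ric x x = ∑ i, d i * (⟪e i, x⟫ * ⟪e i, x⟫) := by
    rw [hB]
    conv_lhs => rw [← hxsum x]
    simp only [map_sum, LinearMap.sum_apply, map_smul, LinearMap.smul_apply, smul_eq_mul,
      ← hB, part1]
    refine Finset.sum_congr rfl fun i _ => ?_
    rw [Finset.sum_eq_single i (fun b _ hb => by simp [hb]) (by simp)]
    simp
    try ring
  rw [hdiag]
  have hex : ∃ i, ⟪e i, x⟫ ≠ 0 := by
    by_contra h
    push_neg at h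
    apply hx
    rw [← hxsum x]
    simp [h]
  obtain ⟨i0, hi0⟩ := hex
  have hlt : ∀ i ∈ Finset.univ, d i * (⟪e i, x⟫ * ⟪e i, x⟫) ≤ 0 := by
    intro i _
    have := d_neg i
    nlinarith [mul_self_nonneg (⟪e i, x⟫)]
  calc (∑ i, d i * (⟪e i, x⟫ * ⟪e i, x⟫)) < ∑ _i : Fin 10, (0:ℝ) :=
        Finset.sum_lt_sum hlt ⟨i0, Finset.mem_univ i0,
          mul_neg_of_neg_of_pos (d_neg i0) (mul_self_pos.mpr hi0)⟩
      _ = 0 := by simp
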